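/- arXiv:1804.01529 — 9 statements merged into one kernel-verified Lean document; each statement's English description precedes it below -/
import Mathlib

section
/- Let X be a real-valued random variable with E[X] = 0, E[X^2] = σ², E[X^3] ≥ relevant 0, and E[X^4] ≤ c·σ⁴ for some c > 0. Then Pr[X ≥ 0] ≤ 1 - 1/(2c). -/
open MeasureTheory Finset

/-!
The quartic `q y = 1 + 3/4 y - y² - 1/4 y³ + 1/2 y⁴ = (y + 1)² (2y² - 5y + 4) / 4` is nonnegative,
and `q y - 1 = y (y - 1)² (2y + 3) / 4` is nonnegative for `y ≥ 0`, so `q` majorizes the indicator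
of `[0, ∞)`, touching it at `-1`, `0` and `1`. Hence `P(X ≥ 0) ≤ E q(X / t)` for every `t > 0`, and
the right-hand side only involves the first four moments: it is at most
`1 - σ²/t² + cσ⁴/(2t⁴)`, which for the minimizing choice `t² = cσ²` equals
`1 - 1/(2c)`.
-/

noncomputable def quarticMajorantCoeff : ℕ → ℝ
  | 0 => 1
  | 1 => 3 / 4
  | 2 => -1
  | 3 => -1 / 4
  | 4 => 1 / 2
  | _ => 0

noncomputable def quarticMajorant (y : ℝ) : ℝ :=
  ∑ k ∈ range 5, quarticMajorantCoeff k * y ^ k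

lemma quarticMajorant_eq (y : ℝ) :
    quarticMajorant y = 1 + 3 / 4 * y - y ^ 2 - 1 / 4 * y ^ 3 + 1 / 2 * y ^ 4 := by
  simp only [quarticMajorant, sum_range_succ, sum_range_zero, quarticMajorantCoeff]
  ring

lemma quarticMajorant_nonneg (y : ℝ) : 0 ≤ quarticMajorant y := by
  have hquad : 0 < 2 * y ^ 2 - 5 * y + 4 := by nlinarith [sq_nonneg (4 * y - 5)]
  have : quarticMajorant y = (y + 1) ^ 2 * (2 * y ^ 2 - 5 * y + 4) / 4 := by
    rw [quarticMajorant_eq]; ring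
  rw [this]
  positivity

lemma one_le_quarticMajorant {y : ℝ} (hy : 0 ≤ y) : 1 ≤ quarticMajorant y := by
  have : quarticMajorant y = 1 + y * (y - 1) ^ 2 * (2 * y + 3) / 4 := by
    rw [quarticMajorant_eq]; ring
  rw [this]
  have : 0 ≤ y * (y - 1) ^ 2 * (2 * y + 3) := by positivity
  linarith

lemma quarticMajorant_div (y t : ℝ) :
    quarticMajorant (y / t) = ∑ k ∈ range 5, quarticMajorantCoeff k / t ^ k * y ^ k := by
  simp only [quarticMajorant, div_pow]
  exact sum_congr rfl fun k _ => by ring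

section

variable {α : Type*} [MeasurableSpace α] {μ : Measure α}

lemma measureReal_le_integral_of_one_le_on [IsFiniteMeasure μ] {f : α → ℝ} {s : Set α}
    (hf : 0 ≤ᵐ[μ] f) (hfi : Integrable f μ) (hs : ∀ x ∈ s, 1 ≤ f x) :
    μ.real s ≤ ∫ x, f x ∂μ :=
  calc μ.real s ≤ μ.real {x | 1 ≤ f x} := measureReal_mono hs
    _ = 1 * μ.real {x | 1 ≤ f x} := (one_mul _).symm
    _ ≤ ∫ x, f x ∂μ := mul_meas_ge_le_integral_of_nonneg hf hfi 1

lemma integrable_sum_mul_pow {X : α → ℝ} {n : ℕ} (a : ℕ → ℝ)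
    (hX : ∀ k ∈ range n, Integrable (fun x => X x ^ k) μ) :
    Integrable (fun x => ∑ k ∈ range n, a k * X x ^ k) μ :=
  integrable_finsetSum _ fun k hk => (hX k hk).const_mul (a k)

lemma integral_sum_mul_pow {X : α → ℝ} {n : ℕ} (a : ℕ → ℝ)
    (hX : ∀ k ∈ range n, Integrable (fun x => X x ^ k) μ) :
    ∫ x, ∑ k ∈ range n, a k * X x ^ k ∂μ = ∑ k ∈ range n, a k * ∫ x, X x ^ k ∂μ := by
  rw [integral_finsetSum _ fun k hk => (hX k hk).const_mul (a k)]
  exact sum_congr rfl fun k _ => integral_const_mul _ _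

end

theorem small_dev_fourth_moment_general
    {Ω : Type*} [MeasurableSpace Ω] (μ : Measure Ω) [IsProbabilityMeasure μ]
    (X : Ω → ℝ) (σ c : ℝ) (hσ : 0 < σ) (hc : 0 < c)
    (hint : ∀ k : ℕ, k ≤ 4 → Integrable (fun ω => (X ω) ^ k) μ)
    (h1 : ∫ ω, X ω ∂μ = 0)
    (h2 : ∫ ω, (X ω) ^ 2 ∂μ = σ ^ 2)
    (h3 : 0 ≤ ∫ ω, (X ω) ^ 3 ∂μ)
    (h4 : ∫ ω, (X ω) ^ 4 ∂μ ≤ c * σ ^ 4) :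
    (μ {ω | 0 ≤ X ω}).toReal ≤ 1 - 1 / (2 * c) := by
  set t := σ * √c
  have ht : 0 < t := by positivity
  have ht2 : t ^ 2 = c * σ ^ 2 := by rw [mul_pow, Real.sq_sqrt hc.le]; ring
  have hmom : ∀ k ∈ range 5, Integrable (fun ω => X ω ^ k) μ :=
    fun k hk => hint k (Nat.lt_succ_iff.mp (mem_range.mp hk))
  have hq : ∀ ω, quarticMajorant (X ω / t) =
      ∑ k ∈ range 5, quarticMajorantCoeff k / t ^ k * X ω ^ k :=
    fun ω => quarticMajorant_div _ _
  calc μ.real {ω | 0 ≤ X ω} ≤ ∫ ω, quarticMajorant (X ω / t) ∂μ := by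
        refine measureReal_le_integral_of_one_le_on
          (Filter.Eventually.of_forall fun ω => quarticMajorant_nonneg _) ?_
          fun ω hω => one_le_quarticMajorant (div_nonneg hω ht.le)
        simp only [hq]
        exact integrable_sum_mul_pow _ hmom
    _ = ∑ k ∈ range 5, quarticMajorantCoeff k / t ^ k * ∫ ω, X ω ^ k ∂μ := by
        simp only [hq]; exact integral_sum_mul_pow _ hmom
    _ = 1 - σ ^ 2 / t ^ 2 - (∫ ω, X ω ^ 3 ∂μ) / (4 * t ^ 3)
          + (∫ ω, X ω ^ 4 ∂μ) / (2 * t ^ 4) := by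
        simp only [sum_range_succ, sum_range_zero, quarticMajorantCoeff, pow_zero, pow_one,
          integral_const, probReal_univ, h1, h2]
        ring
    _ ≤ 1 - σ ^ 2 / t ^ 2 + c * σ ^ 4 / (2 * t ^ 4) := by
        have hcubic : 0 ≤ (∫ ω, X ω ^ 3 ∂μ) / (4 * t ^ 3) := by positivity
        have hquartic : (∫ ω, X ω ^ 4 ∂μ) / (2 * t ^ 4) ≤ c * σ ^ 4 / (2 * t ^ 4) := by gcongr
        linarith
    _ = 1 - 1 / (2 * c) := by
        rw [show t ^ 4 = (t ^ 2) ^ 2 by ring, ht2]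
        field_simp
        ring

theorem small_dev_fourth_moment
    {Ω : Type*} [MeasurableSpace Ω] (μ : Measure Ω) [IsProbabilityMeasure μ]
    (X : Ω → ℝ) (hX : Measurable X) (σ c : ℝ) (hσ : 0 < σ) (hc : 0 < c)
    (hint : ∀ k : ℕ, k ≤ 4 → Integrable (fun ω => (X ω) ^ k) μ)
    (h1 : ∫ ω, X ω ∂μ = 0)
    (h2 : ∫ ω, (X ω) ^ 2 ∂μ = σ ^ 2)
    (h3 : 0 ≤ ∫ ω, (X ω) ^ 3 ∂μ)
    (h4 : ∫ ω, (X ω) ^ 4 ∂μ ≤ c * σ ^ 4) :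
    (μ {ω | 0 ≤ X ω}).toReal ≤ 1 - 1 / (2 * c) :=
  small_dev_fourth_moment_general μ X σ c hσ hc hint h1 h2 h3 h4
end

section
/- For any ℓ, r > 0, the quartic polynomial Q_{ℓ,r}(x) = (1/(ℓ²(ℓ+r)³))·(ℓ+x)²·((ℓ+r)³ - 2(ℓ²+3ℓr+r²)x + (3ℓ+r)x²) satisfies Q_{ℓ,r}(x) ≥ 0 for all real x. -/
/-!
The factor `(l + x)²` is a square, so it suffices that the quadratic factor
`(3l + r) x² - 2(l² + 3lr + r²) x + (l + r)³` is nonnegative. Its leading coefficient is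
positive and its discriminant is `-4 l² (2l² + 4lr + r²) < 0`.
-/

section LinearOrderedField

variable {K : Type*} [Field K] [LinearOrder K] [IsStrictOrderedRing K]

theorem quadratic_nonneg_of_discrim_nonpos {a b c : K} (ha : 0 < a) (h : discrim a b c ≤ 0)
    (x : K) : 0 ≤ a * (x * x) + b * x + c := by
  have completed_square :
      4 * a * (a * (x * x) + b * x + c) = (2 * a * x + b) ^ 2 - discrim a b c := by
    rw [discrim]; ring
  refine nonneg_of_mul_nonneg_right ?_ (by positivity : (0 : K) < 4 * a)
  rw [completed_square]
  linarith [sq_nonneg (2 * a * x + b)]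

end LinearOrderedField

theorem discrim_Qlr_quadratic_factor {R : Type*} [CommRing R] (l r : R) :
    discrim (3 * l + r) (-2 * (l ^ 2 + 3 * l * r + r ^ 2)) ((l + r) ^ 3) =
      -4 * l ^ 2 * (2 * l ^ 2 + 4 * l * r + r ^ 2) := by
  rw [discrim]; ring

theorem Qlr_nonneg (l r : ℝ) (hl : 0 < l) (hr : 0 < r) (x : ℝ) :
    0 ≤ (1 / (l ^ 2 * (l + r) ^ 3)) * (l + x) ^ 2 *
      ((l + r) ^ 3 - 2 * (l ^ 2 + 3 * l * r + r ^ 2) * x + (3 * l + r) * x ^ 2) := by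
  have discrim_nonpos :
      discrim (3 * l + r) (-2 * (l ^ 2 + 3 * l * r + r ^ 2)) ((l + r) ^ 3) ≤ 0 := by
    rw [discrim_Qlr_quadratic_factor]
    have : 0 ≤ l ^ 2 * (2 * l ^ 2 + 4 * l * r + r ^ 2) := by positivity
    linarith
  have factor_nonneg := quadratic_nonneg_of_discrim_nonpos (by positivity) discrim_nonpos x
  apply mul_nonneg (by positivity)
  linarith
end

section
/- For any ℓ, r > 0, the polynomial Q_{ℓ,r}(x) = (1/(ℓ²(ℓ+r)³))·(ℓ+x)²·((ℓ+r)³ - 2(ℓ²+3ℓr+r²)x + (3ℓ+r)x²) satisfies Q_{ℓ,r}(x) ≥ 1 for all x ≥ 0. -/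
/-! Q_{ℓ,r} - 1 factors as x·(4ℓ² + 2ℓr + (3ℓ + r)x)·(x - r)² / (ℓ²(ℓ + r)³), a product of
factors that are nonnegative for x ≥ 0; the double root at x = r is where Q_{ℓ,r} touches 1. -/

noncomputable def Qlr (l r x : ℝ) : ℝ :=
  (1 / (l ^ 2 * (l + r) ^ 3)) * (l + x) ^ 2 *
    ((l + r) ^ 3 - 2 * (l ^ 2 + 3 * l * r + r ^ 2) * x + (3 * l + r) * x ^ 2)

theorem Qlr_sub_one {l r : ℝ} (hl : l ≠ 0) (hlr : l + r ≠ 0) (x : ℝ) :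
    Qlr l r x - 1 =
      x * (4 * l ^ 2 + 2 * l * r + (3 * l + r) * x) * (x - r) ^ 2 / (l ^ 2 * (l + r) ^ 3) := by
  unfold Qlr
  field_simp
  ring

theorem Qlr_sub_one_nonneg {l r x : ℝ} (hl : 0 < l) (hr : 0 < r) (hx : 0 ≤ x) :
    0 ≤ Qlr l r x - 1 := by
  rw [Qlr_sub_one hl.ne' (by positivity)]
  have hlin : 0 ≤ 4 * l ^ 2 + 2 * l * r + (3 * l + r) * x := by positivity
  positivity

theorem Qlr_ge_one (l r : ℝ) (hl : 0 < l) (hr : 0 < r) (x : ℝ) (hx : 0 ≤ x) :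
    1 ≤ (1 / (l ^ 2 * (l + r) ^ 3)) * (l + x) ^ 2 *
      ((l + r) ^ 3 - 2 * (l ^ 2 + 3 * l * r + r ^ 2) * x + (3 * l + r) * x ^ 2) :=
  sub_nonneg.mp (Qlr_sub_one_nonneg hl hr hx)
end

section
/- For any ℓ, r > 0, the polynomial Q_{ℓ,r}(x) = (1/(ℓ²(ℓ+r)³))·(ℓ+x)²·((ℓ+r)³ - 2(ℓ²+3ℓr+r²)x + (3ℓ+r)x²) dominates the indicator of the nonnegative half-line: Q_{ℓ,r}(x) ≥ 1 for x ≥ 0 and Q_{ℓ,r}(x) ≥ 0 for all x. -/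
/-!
Both claims come from two polynomial identities. First,
`Q(x) - 1 = x (x - r)² ((3ℓ + r) x + 2ℓ(2ℓ + r)) / (ℓ² (ℓ + r)³)`,
whose right side is visibly nonnegative for `x ≥ 0`. Second, the quadratic factor `q` of `Q` has
negative discriminant: `(3ℓ + r) q(x) = ((3ℓ + r) x - (ℓ² + 3ℓr + r²))² + ℓ² (2ℓ² + 4ℓr + r²)`,
so `Q = (ℓ + x)² q / (ℓ² (ℓ + r)³)` is nonnegative everywhere.
-/

namespace Qlr

def quadratic (l r x : ℝ) : ℝ :=
  (l + r) ^ 3 - 2 * (l ^ 2 + 3 * l * r + r ^ 2) * x + (3 * l + r) * x ^ 2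

noncomputable def eval (l r x : ℝ) : ℝ :=
  (1 / (l ^ 2 * (l + r) ^ 3)) * (l + x) ^ 2 * quadratic l r x

variable {l r : ℝ}

theorem eval_sub_one (hl : l ≠ 0) (hlr : l + r ≠ 0) (x : ℝ) :
    eval l r x - 1 =
      x * (x - r) ^ 2 * ((3 * l + r) * x + 2 * l * (2 * l + r)) / (l ^ 2 * (l + r) ^ 3) := by
  unfold eval quadratic
  field_simp
  ring

theorem one_le_eval (hl : 0 < l) (hr : 0 ≤ r) {x : ℝ} (hx : 0 ≤ x) : 1 ≤ eval l r x := by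
  rw [← sub_nonneg, eval_sub_one hl.ne' (by positivity)]
  positivity

theorem mul_quadratic_eq (x : ℝ) :
    (3 * l + r) * quadratic l r x =
      ((3 * l + r) * x - (l ^ 2 + 3 * l * r + r ^ 2)) ^ 2 +
        l ^ 2 * (2 * l ^ 2 + 4 * l * r + r ^ 2) := by
  unfold quadratic
  ring

theorem quadratic_pos (hl : 0 < l) (hr : 0 ≤ r) (x : ℝ) : 0 < quadratic l r x := by
  have h : 0 < (3 * l + r) * quadratic l r x := by
    rw [mul_quadratic_eq]
    positivity
  exact pos_of_mul_pos_right h (by positivity)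

theorem eval_nonneg (hl : 0 < l) (hr : 0 ≤ r) (x : ℝ) : 0 ≤ eval l r x := by
  have := quadratic_pos hl hr x
  unfold eval
  positivity

end Qlr

theorem Qlr_dominates_indicator (l r : ℝ) (hl : 0 < l) (hr : 0 < r) :
    (∀ x : ℝ, 0 ≤ x →
      1 ≤ (1 / (l ^ 2 * (l + r) ^ 3)) * (l + x) ^ 2 *
        ((l + r) ^ 3 - 2 * (l ^ 2 + 3 * l * r + r ^ 2) * x + (3 * l + r) * x ^ 2)) ∧
    (∀ x : ℝ,
      0 ≤ (1 / (l ^ 2 * (l + r) ^ 3)) * (l + x) ^ 2 *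
        ((l + r) ^ 3 - 2 * (l ^ 2 + 3 * l * r + r ^ 2) * x + (3 * l + r) * x ^ 2)) :=
  ⟨fun _ hx => Qlr.one_le_eval hl hr.le hx, Qlr.eval_nonneg hl hr.le⟩
end

section
/- Let X₁, ..., Xₙ be independent random variables with E[Xᵢ] = 0 and |Xᵢ| ≤ 1 for each i, and let X = ∑ᵢ Xᵢ. Then E[X⁴] ≤ 3·(E[X²])² + E[X²]. -/
/-!
Induct on the number of summands. If `S` and `Y` are independent and centred, the binomial
expansion of `E[(S + Y)⁴]` loses its odd terms and becomes `E[S⁴] + 6 E[S²] E[Y²] + E[Y⁴]`,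
while `E[(S + Y)²] = E[S²] + E[Y²]`. Since `|Y| ≤ 1` gives `E[Y⁴] ≤ E[Y²]`, the bound
`E[S⁴] ≤ 3a² + a` with `a = E[S²]` and `b = E[Y²]` propagates:
`3a² + a + 6ab + b ≤ 3(a + b)² + (a + b)`.
-/

open MeasureTheory ProbabilityTheory Finset

section FourthMoment

variable {Ω : Type*} [MeasurableSpace Ω] {μ : Measure Ω}

theorem MeasureTheory.MemLp.integrable_pow_of_le [IsFiniteMeasure μ] {f : Ω → ℝ} {n m : ℕ}
    (hf : MemLp f n μ) (hmn : m ≤ n) : Integrable (fun ω ↦ f ω ^ m) μ := by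
  refine (integrable_norm_iff (f := fun ω ↦ f ω ^ m) (hf.aestronglyMeasurable.pow m)).1 ?_
  simpa only [norm_pow] using (hf.mono_exponent (by exact_mod_cast hmn)).integrable_norm_pow'

theorem ProbabilityTheory.IndepFun.integral_add_pow [IsFiniteMeasure μ] {X Y : Ω → ℝ}
    (hXY : IndepFun X Y μ) {n : ℕ} (hX : MemLp X n μ) (hY : MemLp Y n μ) :
    ∫ ω, (X ω + Y ω) ^ n ∂μ =
      ∑ m ∈ range (n + 1), (∫ ω, X ω ^ m ∂μ) * (∫ ω, Y ω ^ (n - m) ∂μ) * n.choose m := by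
  have hpow (m k : ℕ) : IndepFun (fun ω ↦ X ω ^ m) (fun ω ↦ Y ω ^ k) μ :=
    hXY.comp (measurable_id.pow_const m) (measurable_id.pow_const k)
  simp_rw [add_pow]
  rw [integral_finsetSum]
  · refine sum_congr rfl fun m hm ↦ ?_
    have hmn : m ≤ n := mem_range_succ_iff.1 hm
    rw [integral_mul_const, (hpow m (n - m)).integral_fun_mul_eq_mul_integral
      (hX.integrable_pow_of_le (by omega)).aestronglyMeasurable
      (hY.integrable_pow_of_le (by omega)).aestronglyMeasurable]
  · intro m hm
    exact ((hpow m (n - m)).integrable_mul (hX.integrable_pow_of_le (mem_range_succ_iff.1 hm))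
      (hY.integrable_pow_of_le (by omega))).mul_const _

section Centred

variable [IsProbabilityMeasure μ] {X Y : Ω → ℝ}

theorem ProbabilityTheory.IndepFun.integral_add_sq_of_integral_eq_zero (hXY : IndepFun X Y μ)
    (hX : MemLp X 2 μ) (hY : MemLp Y 2 μ) (hX0 : ∫ ω, X ω ∂μ = 0) (hY0 : ∫ ω, Y ω ∂μ = 0) :
    ∫ ω, (X ω + Y ω) ^ 2 ∂μ = ∫ ω, X ω ^ 2 ∂μ + ∫ ω, Y ω ^ 2 ∂μ := by
  rw [hXY.integral_add_pow hX hY]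
  simp [sum_range_succ, hX0, hY0]
  ring

theorem ProbabilityTheory.IndepFun.integral_add_pow_four_of_integral_eq_zero
    (hXY : IndepFun X Y μ) (hX : MemLp X 4 μ) (hY : MemLp Y 4 μ)
    (hX0 : ∫ ω, X ω ∂μ = 0) (hY0 : ∫ ω, Y ω ∂μ = 0) :
    ∫ ω, (X ω + Y ω) ^ 4 ∂μ =
      ∫ ω, X ω ^ 4 ∂μ + 6 * (∫ ω, X ω ^ 2 ∂μ) * (∫ ω, Y ω ^ 2 ∂μ) + ∫ ω, Y ω ^ 4 ∂μ := by
  rw [hXY.integral_add_pow hX hY]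
  simp [sum_range_succ, hX0, hY0, Nat.choose]
  ring

end Centred

theorem integral_pow_four_le_integral_sq {Y : Ω → ℝ} (hY : Integrable (fun ω ↦ Y ω ^ 2) μ)
    (hY1 : ∀ᵐ ω ∂μ, |Y ω| ≤ 1) : ∫ ω, Y ω ^ 4 ∂μ ≤ ∫ ω, Y ω ^ 2 ∂μ :=
  integral_mono_of_nonneg (ae_of_all _ fun ω ↦ by positivity) hY <| hY1.mono fun ω hω ↦ by
    change Y ω ^ 4 ≤ Y ω ^ 2
    nlinarith [(sq_le_one_iff_abs_le_one _).2 hω, sq_nonneg (Y ω)]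

theorem integral_finsetSum_pow_four_le [IsProbabilityMeasure μ] {ι : Type*} {X : ι → Ω → ℝ}
    (hmeas : ∀ i, AEMeasurable (X i) μ) (hindep : iIndepFun X μ)
    (hmean : ∀ i, ∫ ω, X i ω ∂μ = 0) (hbound : ∀ i, ∀ᵐ ω ∂μ, |X i ω| ≤ 1) (s : Finset ι) :
    ∫ ω, (∑ i ∈ s, X i ω) ^ 4 ∂μ ≤
      3 * (∫ ω, (∑ i ∈ s, X i ω) ^ 2 ∂μ) ^ 2 + ∫ ω, (∑ i ∈ s, X i ω) ^ 2 ∂μ := by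
  classical
  have hLp (i : ι) : MemLp (X i) 4 μ := .of_bound (hmeas i).aestronglyMeasurable 1 (hbound i)
  induction s using cons_induction with
  | empty => simp
  | cons a s ha ih =>
    set S : Ω → ℝ := fun ω ↦ ∑ i ∈ s, X i ω
    have hS : MemLp S 4 μ := memLp_finsetSum s fun i _ ↦ hLp i
    have hS0 : ∫ ω, S ω ∂μ = 0 := by
      rw [integral_finsetSum s fun i _ ↦ (hLp i).integrable (by norm_num)]
      simp [hmean]
    have hind : IndepFun (X a) S μ := by
      simpa only [S, ← Finset.sum_apply] using (hindep.indepFun_finsetSum_of_notMem₀ hmeas ha).symm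
    have hsq := hind.integral_add_sq_of_integral_eq_zero ((hLp a).mono_exponent (by norm_num))
      (hS.mono_exponent (by norm_num)) (hmean a) hS0
    have hfour := hind.integral_add_pow_four_of_integral_eq_zero (hLp a) hS (hmean a) hS0
    have hYfour := integral_pow_four_le_integral_sq ((hLp a).integrable_pow_of_le (by norm_num))
      (hbound a)
    simp only [sum_cons]
    rw [hsq, hfour]
    linarith [sq_nonneg (∫ ω, X a ω ^ 2 ∂μ)]

end FourthMoment

theorem fourth_moment_bound
    {Ω : Type*} [MeasurableSpace Ω] (μ : Measure Ω) [IsProbabilityMeasure μ]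
    (n : ℕ) (X : Fin n → Ω → ℝ) (hmeas : ∀ i, Measurable (X i))
    (hindep : iIndepFun X μ)
    (hmean : ∀ i, ∫ ω, X i ω ∂μ = 0)
    (hbound : ∀ i ω, |X i ω| ≤ 1) :
    ∫ ω, (∑ i, X i ω) ^ 4 ∂μ ≤
      3 * (∫ ω, (∑ i, X i ω) ^ 2 ∂μ) ^ 2 + ∫ ω, (∑ i, X i ω) ^ 2 ∂μ :=
  integral_finsetSum_pow_four_le (fun i ↦ (hmeas i).aemeasurable) hindep hmean
    (fun i ↦ ae_of_all μ (hbound i)) univ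
end

section
/- Fix a > 0 and 0 < p < 1/2, and let X be the random variable taking value -a with probability p, value 0 with probability 1-2p, and value a with probability p. Then E[X]=0, E[X³]=0, E[X⁴] = c·(E[X²])² with c = 1/(2p), and Pr[X ≥ 0] = 1 - p = 1 - 1/(2c), so the bound Pr[X ≥ 0] ≤ 1 - 1/(2c) is tight. -/
/-! The atom at `0` contributes nothing to a moment of order `n ≥ 1`, so `E[Xⁿ] = ((-a)ⁿ + aⁿ) p`:
odd moments cancel and `E[X⁴] = 2pa⁴ = (2pa²)² / (2p)`. The event `X ≥ 0` is the complement of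
the atom at `-a`. -/

open MeasureTheory

section ThreePoint

variable {Ω : Type*} [MeasurableSpace Ω] {μ : Measure Ω} {X : Ω → ℝ} {a : ℝ}

lemma integral_comp_of_symm_three_valued [IsFiniteMeasure μ] (hX : Measurable X)
    (ha : a ≠ 0) (hsupp : ∀ ω, X ω = -a ∨ X ω = 0 ∨ X ω = a) {f : ℝ → ℝ}
    (hf : f 0 = 0) :
    ∫ ω, f (X ω) ∂μ = f (-a) * μ.real {ω | X ω = -a} + f a * μ.real {ω | X ω = a} := by
  have hneg : MeasurableSet {ω | X ω = -a} := hX (measurableSet_singleton _)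
  have hpos : MeasurableSet {ω | X ω = a} := hX (measurableSet_singleton _)
  have hsplit : (fun ω => f (X ω)) = fun ω =>
      {ω | X ω = -a}.indicator (fun _ => f (-a)) ω + {ω | X ω = a}.indicator (fun _ => f a) ω := by
    funext ω
    have : -a ≠ a := fun h => ha (by linarith)
    rcases hsupp ω with h | h | h <;> simp [h, hf, ha, ha.symm, this, this.symm]
  rw [hsplit,
    integral_add ((integrable_const _).indicator hneg) ((integrable_const _).indicator hpos),
    integral_indicator_const _ hneg, integral_indicator_const _ hpos, smul_eq_mul, smul_eq_mul,
    mul_comm, mul_comm (μ.real _)]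

lemma measureReal_nonneg_of_symm_three_valued [IsProbabilityMeasure μ]
    (hX : Measurable X) (ha : 0 < a) (hsupp : ∀ ω, X ω = -a ∨ X ω = 0 ∨ X ω = a) :
    μ.real {ω | 0 ≤ X ω} = 1 - μ.real {ω | X ω = -a} := by
  have hset : {ω | 0 ≤ X ω} = {ω | X ω = -a}ᶜ := by
    ext ω
    simp only [Set.mem_ofPred_eq, Set.mem_compl_iff]
    rcases hsupp ω with h | h | h <;> rw [h] <;> constructor <;> intro h' <;>
      first | exact absurd rfl h' | linarith
  exact hset ▸ probReal_compl_eq_one_sub (hX (measurableSet_singleton _))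

end ThreePoint

theorem three_point_tight_general
    {Ω : Type*} [MeasurableSpace Ω] (μ : Measure Ω) [IsProbabilityMeasure μ]
    (X : Ω → ℝ) (hX : Measurable X) (a p : ℝ) (ha : 0 < a) (hp0 : 0 < p)
    (hsupp : ∀ ω, X ω = -a ∨ X ω = 0 ∨ X ω = a)
    (hpa : μ {ω | X ω = -a} = ENNReal.ofReal p)
    (hpb : μ {ω | X ω = a} = ENNReal.ofReal p) :
    (∫ ω, X ω ∂μ = 0) ∧
    (∫ ω, (X ω) ^ 3 ∂μ = 0) ∧
    (∫ ω, (X ω) ^ 4 ∂μ = (1 / (2 * p)) * (∫ ω, (X ω) ^ 2 ∂μ) ^ 2) ∧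
    ((μ {ω | 0 ≤ X ω}).toReal = 1 - p) ∧
    (1 - p = 1 - 1 / (2 * (1 / (2 * p)))) := by
  have hpa' : μ.real {ω | X ω = -a} = p := by
    rw [measureReal_def, hpa, ENNReal.toReal_ofReal hp0.le]
  have hpb' : μ.real {ω | X ω = a} = p := by
    rw [measureReal_def, hpb, ENNReal.toReal_ofReal hp0.le]
  have moment (n : ℕ) (hn : n ≠ 0) : ∫ ω, (X ω) ^ n ∂μ = ((-a) ^ n + a ^ n) * p := by
    rw [integral_comp_of_symm_three_valued hX ha.ne' hsupp (f := (· ^ n)) (zero_pow hn),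
      hpa', hpb']
    ring
  refine ⟨?_, ?_, ?_, ?_, ?_⟩
  · simpa using moment 1 one_ne_zero
  · rw [moment 3 three_ne_zero]; ring
  · rw [moment 4 four_ne_zero, moment 2 two_ne_zero]
    field_simp
    ring
  · rw [← measureReal_def, measureReal_nonneg_of_symm_three_valued hX ha hsupp, hpa']
  · field_simp

theorem three_point_tight
    {Ω : Type*} [MeasurableSpace Ω] (μ : Measure Ω) [IsProbabilityMeasure μ]
    (X : Ω → ℝ) (hX : Measurable X) (a p : ℝ) (ha : 0 < a) (hp0 : 0 < p) (hp : p < 1/2)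
    (hsupp : ∀ ω, X ω = -a ∨ X ω = 0 ∨ X ω = a)
    (hpa : μ {ω | X ω = -a} = ENNReal.ofReal p)
    (hpb : μ {ω | X ω = a} = ENNReal.ofReal p) :
    (∫ ω, X ω ∂μ = 0) ∧
    (∫ ω, (X ω) ^ 3 ∂μ = 0) ∧
    (∫ ω, (X ω) ^ 4 ∂μ = (1 / (2 * p)) * (∫ ω, (X ω) ^ 2 ∂μ) ^ 2) ∧
    ((μ {ω | 0 ≤ X ω}).toReal = 1 - p) ∧
    (1 - p = 1 - 1 / (2 * (1 / (2 * p)))) :=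
  three_point_tight_general μ X hX a p ha hp0 hsupp hpa hpb
end

section
/- Let X be a random variable with E[X] = 0 and E[X²] = σ² > 0, and let δ > 0. For the polynomial Q_r(x) = 1 + (3/(4r))x - (1/r²)x² - (1/(4r³))x³ + (1/(2r⁴))x⁴ with r = √3·σ, if E[X³] ≥ -σ² and E[X⁴] ≤ 3σ⁴ + σ², then E[Q_r(X - δ)] ≤ 5/6 + (2δ⁴ + √3·δ³σ + (2+8δ)σ² + (√3 - 6√3·δ)σ³)/(36σ⁴). -/
/-!
Expanding `Q_r (X - δ)` in powers of `X`, its expectation is a linear combination of the first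
four moments of `X`. For `r ≥ 0` and `δ ≥ 0` the coefficient of `X³` is nonpositive and that of
`X⁴` nonnegative, so the lower bound on `E[X³]` and the upper bound on `E[X⁴]` may be substituted; with
`r² = 3σ²` what remains is an identity of rational functions in `σ`, `δ` and `√3`.
-/

open MeasureTheory

noncomputable section

def quarticQ (r x : ℝ) : ℝ :=
  1 + (3 / (4 * r)) * x - (1 / r ^ 2) * x ^ 2 - (1 / (4 * r ^ 3)) * x ^ 3
    + (1 / (2 * r ^ 4)) * x ^ 4

/-- Taylor coefficients of `x ↦ Q_r (x - δ)` at `0`. -/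
def shiftedQCoeff (r δ : ℝ) : ℕ → ℝ
  | 0 => 1 - 3 / 4 * r⁻¹ * δ - r⁻¹ ^ 2 * δ ^ 2 + 1 / 4 * r⁻¹ ^ 3 * δ ^ 3 + 1 / 2 * r⁻¹ ^ 4 * δ ^ 4
  | 1 => 3 / 4 * r⁻¹ + 2 * r⁻¹ ^ 2 * δ - 3 / 4 * r⁻¹ ^ 3 * δ ^ 2 - 2 * r⁻¹ ^ 4 * δ ^ 3
  | 2 => -r⁻¹ ^ 2 + 3 / 4 * r⁻¹ ^ 3 * δ + 3 * r⁻¹ ^ 4 * δ ^ 2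
  | 3 => -(1 / 4) * r⁻¹ ^ 3 - 2 * r⁻¹ ^ 4 * δ
  | 4 => 1 / 2 * r⁻¹ ^ 4
  | _ => 0

end

theorem quarticQ_sub_eq_sum (r δ x : ℝ) :
    quarticQ r (x - δ) = ∑ k ∈ Finset.range 5, shiftedQCoeff r δ k * x ^ k := by
  simp only [quarticQ, shiftedQCoeff, Finset.sum_range_succ, Finset.sum_range_zero]
  ring

theorem integral_sum_mul_pow_s15 {Ω : Type*} [MeasurableSpace Ω] {μ : Measure Ω} {X : Ω → ℝ}
    {n : ℕ} (hint : ∀ k : ℕ, k ≤ n → Integrable (fun ω => X ω ^ k) μ) (c : ℕ → ℝ) :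
    ∫ ω, ∑ k ∈ Finset.range (n + 1), c k * X ω ^ k ∂μ
      = ∑ k ∈ Finset.range (n + 1), c k * ∫ ω, X ω ^ k ∂μ := by
  rw [integral_finsetSum]
  · simp only [integral_const_mul]
  · intro k hk
    exact (hint k (Nat.lt_succ_iff.mp (Finset.mem_range.mp hk))).const_mul _

theorem integral_quarticQ_sub_le {Ω : Type*} [MeasurableSpace Ω] {μ : Measure Ω}
    [IsProbabilityMeasure μ] {X : Ω → ℝ} {r δ a b : ℝ} (hr : 0 ≤ r) (hδ : 0 ≤ δ)
    (hint : ∀ k : ℕ, k ≤ 4 → Integrable (fun ω => X ω ^ k) μ)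
    (h3 : a ≤ ∫ ω, X ω ^ 3 ∂μ) (h4 : ∫ ω, X ω ^ 4 ∂μ ≤ b) :
    ∫ ω, quarticQ r (X ω - δ) ∂μ
      ≤ shiftedQCoeff r δ 0 + shiftedQCoeff r δ 1 * ∫ ω, X ω ∂μ
        + shiftedQCoeff r δ 2 * ∫ ω, X ω ^ 2 ∂μ + shiftedQCoeff r δ 3 * a
        + shiftedQCoeff r δ 4 * b := by
  have hc3 : shiftedQCoeff r δ 3 ≤ 0 := by
    have : 0 ≤ 1 / 4 * r⁻¹ ^ 3 + 2 * r⁻¹ ^ 4 * δ := by positivity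
    simp only [shiftedQCoeff]
    linarith
  have hc4 : 0 ≤ shiftedQCoeff r δ 4 := by
    simp only [shiftedQCoeff]
    positivity
  simp_rw [quarticQ_sub_eq_sum]
  rw [integral_sum_mul_pow_s15 hint]
  simp only [Finset.sum_range_succ, Finset.sum_range_zero, pow_zero, pow_one, integral_const,
    probReal_univ, one_smul, mul_one, zero_add]
  linarith [mul_le_mul_of_nonpos_left h3 hc3, mul_le_mul_of_nonneg_left h4 hc4]

theorem shiftedQCoeff_sqrt_three_mul_combination {σ : ℝ} (hσ : σ ≠ 0) (δ : ℝ) :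
    shiftedQCoeff (Real.sqrt 3 * σ) δ 0 + shiftedQCoeff (Real.sqrt 3 * σ) δ 2 * σ ^ 2
      + shiftedQCoeff (Real.sqrt 3 * σ) δ 3 * (-σ ^ 2)
      + shiftedQCoeff (Real.sqrt 3 * σ) δ 4 * (3 * σ ^ 4 + σ ^ 2)
      = 5/6 + (2 * δ ^ 4 + Real.sqrt 3 * δ ^ 3 * σ + (2 + 8 * δ) * σ ^ 2
        + (Real.sqrt 3 - 6 * Real.sqrt 3 * δ) * σ ^ 3) / (36 * σ ^ 4) := by
  have hs : Real.sqrt 3 ^ 2 = 3 := Real.sq_sqrt (by norm_num)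
  have h1 : (Real.sqrt 3 * σ)⁻¹ = Real.sqrt 3 / (3 * σ) := by
    field_simp
    linear_combination -hs
  have h2 : (Real.sqrt 3 * σ)⁻¹ ^ 2 = (3 * σ ^ 2)⁻¹ := by
    rw [inv_pow, mul_pow, hs]
  have h3 : (Real.sqrt 3 * σ)⁻¹ ^ 3 = (Real.sqrt 3 * σ)⁻¹ * (3 * σ ^ 2)⁻¹ := by
    rw [← h2]; ring
  have h4 : (Real.sqrt 3 * σ)⁻¹ ^ 4 = ((3 * σ ^ 2)⁻¹) ^ 2 := by
    rw [← h2]; ring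
  -- after these rewrites `√3` occurs only linearly, so `field_simp; ring` closes the goal
  simp only [shiftedQCoeff]
  rw [h2, h3, h4, h1]
  field_simp
  ring

theorem Q_sqrt3sigma_bound_general
    {Ω : Type*} [MeasurableSpace Ω] (μ : Measure Ω) [IsProbabilityMeasure μ]
    (X : Ω → ℝ) (σ δ : ℝ) (hσ : 0 < σ) (hδ : 0 < δ)
    (hint : ∀ k : ℕ, k ≤ 4 → Integrable (fun ω => (X ω) ^ k) μ)
    (h1 : ∫ ω, X ω ∂μ = 0)
    (h2 : ∫ ω, (X ω) ^ 2 ∂μ = σ ^ 2)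
    (h3 : -σ ^ 2 ≤ ∫ ω, (X ω) ^ 3 ∂μ)
    (h4 : ∫ ω, (X ω) ^ 4 ∂μ ≤ 3 * σ ^ 4 + σ ^ 2) :
    ∫ ω, (1 + (3 / (4 * (Real.sqrt 3 * σ))) * (X ω - δ)
        - (1 / (Real.sqrt 3 * σ) ^ 2) * (X ω - δ) ^ 2
        - (1 / (4 * (Real.sqrt 3 * σ) ^ 3)) * (X ω - δ) ^ 3
        + (1 / (2 * (Real.sqrt 3 * σ) ^ 4)) * (X ω - δ) ^ 4) ∂μ ≤
      5/6 + (2 * δ ^ 4 + Real.sqrt 3 * δ ^ 3 * σ + (2 + 8 * δ) * σ ^ 2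
        + (Real.sqrt 3 - 6 * Real.sqrt 3 * δ) * σ ^ 3) / (36 * σ ^ 4) := by
  have hr : 0 ≤ Real.sqrt 3 * σ := by positivity
  calc ∫ ω, quarticQ (Real.sqrt 3 * σ) (X ω - δ) ∂μ
      ≤ _ := integral_quarticQ_sub_le hr hδ.le hint h3 h4
    _ = _ := by
      rw [h1, h2, mul_zero, add_zero]
      exact shiftedQCoeff_sqrt_three_mul_combination hσ.ne' δ

theorem Q_sqrt3sigma_bound
    {Ω : Type*} [MeasurableSpace Ω] (μ : Measure Ω) [IsProbabilityMeasure μ]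
    (X : Ω → ℝ) (hX : Measurable X) (σ δ : ℝ) (hσ : 0 < σ) (hδ : 0 < δ)
    (hint : ∀ k : ℕ, k ≤ 4 → Integrable (fun ω => (X ω) ^ k) μ)
    (h1 : ∫ ω, X ω ∂μ = 0)
    (h2 : ∫ ω, (X ω) ^ 2 ∂μ = σ ^ 2)
    (h3 : -σ ^ 2 ≤ ∫ ω, (X ω) ^ 3 ∂μ)
    (h4 : ∫ ω, (X ω) ^ 4 ∂μ ≤ 3 * σ ^ 4 + σ ^ 2) :
    ∫ ω, (1 + (3 / (4 * (Real.sqrt 3 * σ))) * (X ω - δ)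
        - (1 / (Real.sqrt 3 * σ) ^ 2) * (X ω - δ) ^ 2
        - (1 / (4 * (Real.sqrt 3 * σ) ^ 3)) * (X ω - δ) ^ 3
        + (1 / (2 * (Real.sqrt 3 * σ) ^ 4)) * (X ω - δ) ^ 4) ∂μ ≤
      5/6 + (2 * δ ^ 4 + Real.sqrt 3 * δ ^ 3 * σ + (2 + 8 * δ) * σ ^ 2
        + (Real.sqrt 3 - 6 * Real.sqrt 3 * δ) * σ ^ 3) / (36 * σ ^ 4) :=
  Q_sqrt3sigma_bound_general μ X σ δ hσ hδ hint h1 h2 h3 h4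
end

section
/- Let δ > 0 and n be such that m := (n+δ)/(δ+1) is a positive integer with m ≤ n. Then there exists a collection of nonnegative pairwise independent random variables X₁, ..., Xₙ, each with mean 1, such that Pr[X₁ + ... + Xₙ < n + δ] = δ/(n+δ). -/
/-!
Let `S` be a random subset of `Fin n` which is `∅` with probability `δ / (n + δ)` and otherwise a
uniformly random `m`-subset, and put `Xᵢ = ((n + δ) / m) · 1[i ∈ S]`. Then `E Xᵢ = 1`, and
`∑ Xᵢ = (n + δ) |S| / m` falls below `n + δ` exactly when `S = ∅`. Pairwise independence of the
events `i ∈ S` amounts to `P(j ∈ S | i ∈ S) = P(j ∈ S)`, i.e. `(m - 1) / (n - 1) = m / (n + δ)`,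
which is the relation `m (δ + 1) = n + δ`.
-/

open MeasureTheory ProbabilityTheory Finset
open scoped NNReal

theorem ProbabilityTheory.IndepSet.indepFun_indicator_const {Ω β γ : Type*} [MeasurableSpace Ω]
    [Zero β] [Zero γ] [MeasurableSpace β] [MeasurableSpace γ] {μ : Measure Ω} {s t : Set Ω}
    (h : IndepSet s t μ) (b : β) (c : γ) :
    IndepFun (s.indicator fun _ ↦ b) (t.indicator fun _ ↦ c) μ :=
  have hs := MeasurableSpace.measurableSet_generateFrom (Set.mem_singleton s)
  have ht := MeasurableSpace.measurableSet_generateFrom (Set.mem_singleton t)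
  indep_of_indep_of_le_right
    (indep_of_indep_of_le_left h (measurable_const.indicator hs).comap_le)
    (measurable_const.indicator ht).comap_le

theorem ProbabilityTheory.indepSet_of_measureReal_inter_eq_mul {Ω : Type*} [MeasurableSpace Ω]
    {μ : Measure Ω} [IsProbabilityMeasure μ] {s t : Set Ω} (hs : MeasurableSet s)
    (ht : MeasurableSet t) (h : μ.real (s ∩ t) = μ.real s * μ.real t) : IndepSet s t μ := by
  rw [indepSet_iff_measure_inter_eq_mul hs ht μ,
    ← ENNReal.toReal_eq_toReal_iff' (by finiteness) (by finiteness), ENNReal.toReal_mul]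
  exact h

section RandomSubset

variable {α : Type*} [Fintype α]

theorem uniformOn_powersetCard_real_superset {k : ℕ} (hk : k ≤ Fintype.card α) (t : Finset α) :
    (uniformOn ((powersetCard k univ : Finset (Finset α)) : Set (Finset α))).real {s | t ⊆ s} =
      k.choose #t / (Fintype.card α).choose #t := by
  classical
  have hevent : {s : Finset α | t ⊆ s} = ↑(univ.filter (t ⊆ ·)) := by ext; simp
  rw [hevent, measureReal_def, uniformOn_apply_finset, inter_filter, inter_univ,
    ENNReal.toReal_div]
  simp only [ENNReal.toReal_natCast, card_powersetCard, card_univ]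
  obtain htk | hkt := le_or_gt #t k
  · have htn : #t ≤ Fintype.card α := htk.trans hk
    rw [← card_univ, card_filter_powersetCard_subset t univ k (subset_univ t) htk, card_univ,
      div_eq_div_iff (by positivity [Nat.choose_pos hk]) (by positivity [Nat.choose_pos htn]),
      mul_comm, mul_comm (k.choose #t : ℝ)]
    exact_mod_cast (Nat.choose_mul htk).symm
  · have hempty : (powersetCard k univ).filter (t ⊆ ·) = ∅ :=
      filter_eq_empty_iff.mpr fun s hs hts ↦
        (card_le_card hts).not_gt ((mem_powersetCard.mp hs).2 ▸ hkt)
    simp [hempty, Nat.choose_eq_zero_of_lt hkt]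

noncomputable def emptyOrUniformSubset (p : ℝ≥0) (k : ℕ) : Measure (Finset α) :=
  (1 - p) • Measure.dirac ∅ +
    p • uniformOn ((powersetCard k univ : Finset (Finset α)) : Set (Finset α))

variable {p : ℝ≥0} {k : ℕ}

theorem isProbabilityMeasure_emptyOrUniformSubset (hp : p ≤ 1) (hk : k ≤ Fintype.card α) :
    IsProbabilityMeasure (emptyOrUniformSubset (α := α) p k) := by
  have : IsProbabilityMeasure
      (uniformOn ((powersetCard k univ : Finset (Finset α)) : Set (Finset α))) :=
    isProbabilityMeasure_uniformOn (finite_toSet _) (by simpa)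
  constructor
  simp [emptyOrUniformSubset, tsub_add_cancel_of_le (ENNReal.coe_le_one_iff.mpr hp)]

theorem emptyOrUniformSubset_real_superset (hk : k ≤ Fintype.card α) {t : Finset α}
    (ht : t.Nonempty) :
    (emptyOrUniformSubset p k).real {s | t ⊆ s} =
      p * k.choose #t / (Fintype.card α).choose #t := by
  rw [emptyOrUniformSubset, measureReal_add_apply, measureReal_nnreal_smul_apply,
    measureReal_nnreal_smul_apply, uniformOn_powersetCard_real_superset hk, measureReal_def,
    Measure.dirac_apply]
  simp [ht.ne_empty, mul_div_assoc]

theorem emptyOrUniformSubset_real_mem (hk : k ≤ Fintype.card α) (i : α) :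
    (emptyOrUniformSubset p k).real {s | i ∈ s} = p * k / Fintype.card α := by
  simpa using emptyOrUniformSubset_real_superset (p := p) hk (singleton_nonempty i)

theorem emptyOrUniformSubset_real_mem_inter_mem (hk : k ≤ Fintype.card α) {i j : α}
    (hij : i ≠ j) :
    (emptyOrUniformSubset p k).real ({s | i ∈ s} ∩ {s | j ∈ s}) =
      p * (k * (k - 1)) / (Fintype.card α * (Fintype.card α - 1)) := by
  classical
  have hpair : {s | i ∈ s} ∩ {s | j ∈ s} = {s : Finset α | {i, j} ⊆ s} := by
    ext; simp [insert_subset_iff]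
  rw [hpair, emptyOrUniformSubset_real_superset hk (insert_nonempty i {j}), card_pair hij,
    Nat.cast_choose_two, Nat.cast_choose_two]
  field_simp

theorem emptyOrUniformSubset_real_card_lt (hp : p ≤ 1) (hk : 0 < k) :
    (emptyOrUniformSubset (α := α) p k).real {s | #s < k} = 1 - p := by
  have hdisj : ((powersetCard k univ : Finset (Finset α)) : Set (Finset α)) ∩ {s | #s < k} = ∅ := by
    ext s; simp +contextual
  rw [emptyOrUniformSubset, measureReal_add_apply, measureReal_nnreal_smul_apply,
    measureReal_nnreal_smul_apply, measureReal_def, Measure.dirac_apply, measureReal_def,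
    uniformOn, cond_apply .of_discrete, hdisj]
  simp [Set.indicator_of_mem (show (∅ : Finset α) ∈ {s : Finset α | #s < k} from hk), hp]

/-- `hpk` is `P(j ∈ s | i ∈ s) = P(j ∈ s)` with the denominators cleared. -/
theorem indepSet_mem_emptyOrUniformSubset (hp : p ≤ 1) (hk : k ≤ Fintype.card α)
    (hpk : (p : ℝ) * k * (Fintype.card α - 1) = (k - 1) * Fintype.card α) {i j : α}
    (hij : i ≠ j) :
    IndepSet {s | i ∈ s} {s | j ∈ s} (emptyOrUniformSubset p k) := by
  have := isProbabilityMeasure_emptyOrUniformSubset hp hk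
  have hn : (1 : ℝ) < Fintype.card α := by
    exact_mod_cast Fintype.one_lt_card_iff.mpr ⟨i, j, hij⟩
  have hn₁ : (Fintype.card α : ℝ) - 1 ≠ 0 := by linarith
  refine indepSet_of_measureReal_inter_eq_mul .of_discrete .of_discrete ?_
  rw [emptyOrUniformSubset_real_mem_inter_mem hk hij, emptyOrUniformSubset_real_mem hk,
    emptyOrUniformSubset_real_mem hk]
  field_simp
  linear_combination -(p * k) * hpk

end RandomSubset

theorem pairwise_indep_counterexample
    (n : ℕ) (δ : ℝ) (hδ : 0 < δ) (m : ℕ) (hm : 0 < m) (hmn : m ≤ n)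
    (hmdef : (m : ℝ) = (n + δ) / (δ + 1)) :
    ∃ (Ω : Type) (_ : MeasurableSpace Ω) (μ : Measure Ω) (_ : IsProbabilityMeasure μ)
      (X : Fin n → Ω → ℝ),
      (∀ i, Measurable (X i)) ∧
      (∀ i ω, 0 ≤ X i ω) ∧
      (∀ i, ∫ ω, X i ω ∂μ = 1) ∧
      (∀ i j, i ≠ j → IndepFun (X i) (X j) μ) ∧
      (μ {ω | ∑ i, X i ω < n + δ}).toReal = δ / (n + δ) := by
  have hnδ : (0 : ℝ) < n + δ := by positivity
  have hn : (0 : ℝ) < n := by exact_mod_cast hm.trans_le hmn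
  have hm₀ : (0 : ℝ) < m := by exact_mod_cast hm
  have hkey : (m : ℝ) * (δ + 1) = n + δ := by rw [hmdef]; field_simp
  let p : ℝ≥0 := ⟨n / (n + δ), by positivity⟩
  have hpR : (p : ℝ) = n / (n + δ) := rfl
  have hp : p ≤ 1 := by
    rw [← NNReal.coe_le_coe]
    exact div_le_one_of_le₀ (by linarith) hnδ.le
  have hmn' : m ≤ Fintype.card (Fin n) := by simpa using hmn
  have hpm : (p : ℝ) * m * (Fintype.card (Fin n) - 1) = (m - 1) * Fintype.card (Fin n) := by
    rw [hpR, Fintype.card_fin]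
    field_simp
    linear_combination -hkey
  let c : ℝ := (n + δ) / m
  have hcm : c * m = n + δ := div_mul_cancel₀ _ hm₀.ne'
  let X (i : Fin n) : Finset (Fin n) → ℝ := {ω | i ∈ ω}.indicator fun _ ↦ c
  have hmean (i : Fin n) : ∫ ω, X i ω ∂emptyOrUniformSubset p m = 1 := by
    rw [integral_indicator_const _ .of_discrete, emptyOrUniformSubset_real_mem hmn', smul_eq_mul,
      hpR, Fintype.card_fin]
    field_simp
    linear_combination hcm
  have hevent : {ω | ∑ i, X i ω < n + δ} = {ω | #ω < m} := by
    ext ω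
    have hsum : ∑ i, X i ω = c * #ω := by simp [X, Set.indicator_apply, sum_ite_mem, mul_comm]
    rw [Set.mem_ofPred_eq, Set.mem_ofPred_eq, hsum, ← hcm,
      mul_lt_mul_iff_right₀ (by positivity), Nat.cast_lt]
  refine ⟨Finset (Fin n), inferInstance, emptyOrUniformSubset p m,
    isProbabilityMeasure_emptyOrUniformSubset hp hmn', X,
    fun i ↦ measurable_const.indicator .of_discrete,
    fun i ↦ Set.indicator_nonneg fun _ _ ↦ by positivity, hmean,
    fun i j hij ↦ (indepSet_mem_emptyOrUniformSubset hp hmn' hpm hij).indepFun_indicator_const c c,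
    ?_⟩
  rw [hevent, ← measureReal_def, emptyOrUniformSubset_real_card_lt hp hm, hpR]
  field_simp
  ring
end

section
/- Let δ > 0 and n be such that m := (n+δ)/(δ+2) is a positive integer with m ≤ n. Then there exists a collection of nonnegative 3-wise independent random variables X₁, ..., Xₙ, each with mean 1, such that Pr[X₁ + ... + Xₙ < n + δ] = (δ+1)²/((δ+2)(n+δ)). -/
open MeasureTheory ProbabilityTheory

/-- A finite family of real random variables is `k`-wise independent if every
subfamily of size at most `k` is mutually independent. -/
def kWiseIndepFun {Ω : Type*} [MeasurableSpace Ω] (μ : Measure Ω) (k : ℕ)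
    {n : ℕ} (X : Fin n → Ω → ℝ) : Prop :=
  ∀ S : Finset (Fin n), S.card ≤ k →
    iIndepFun (fun i : S => X i) μ

/-!
Take a random subset `B` of `Fin n` which, given its size `K`, is uniformly distributed, and put
`X i = (δ + 2) • 1[i ∈ B]`. For `#U = r` one has `P(U ⊆ B) = E[(K)_r] / (n)_r` (falling
factorials), so the `X i` are 3-wise independent with mean 1 as soon as the first three factorial
moments of `K` are those of `Binomial(n, p)`, `p = 1 / (δ + 2)`. Since `m - 1 = p (n - 2)`, a law
of `K` supported on `{0, m, n}` achieves this, and `∑ X i = (δ + 2) K < n + δ = (δ + 2) m`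
happens exactly when `K = 0`.
-/

open Finset
open scoped ENNReal

section RandomSubset

variable {α : Type*} [Fintype α]

lemma descFactorial_mul_card_filter_superset [DecidableEq α] (U : Finset α) (k : ℕ) :
    (Fintype.card α).descFactorial #U * #{ω ∈ powersetCard k univ | U ⊆ ω}
      = (Fintype.card α).choose k * k.descFactorial #U := by
  rcases le_or_gt #U k with hUk | hkU
  · rw [card_filter_powersetCard_subset U univ k (subset_univ U) hUk, card_univ,
      Nat.descFactorial_eq_factorial_mul_choose, Nat.descFactorial_eq_factorial_mul_choose,
      mul_assoc, ← Nat.choose_mul hUk]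
    ring
  · have hempty : {ω ∈ powersetCard k (univ : Finset α) | U ⊆ ω} = ∅ :=
      filter_eq_empty_iff.2 fun ω hω hUω =>
        hkU.not_ge ((card_le_card hUω).trans_eq (mem_powersetCard.1 hω).2)
    rw [hempty, Nat.descFactorial_eq_zero_iff_lt.2 hkU, card_empty, mul_zero, mul_zero]

lemma descFactorial_mul_sum_superset [DecidableEq α] (q : ℕ → ℝ) (U : Finset α) :
    ((Fintype.card α).descFactorial #U : ℝ) *
        ∑ ω with U ⊆ ω, q #ω / (Fintype.card α).choose #ω
      = ∑ k ∈ range (Fintype.card α + 1), q k * k.descFactorial #U := by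
  rw [← sum_fiberwise_of_maps_to' (t := range (Fintype.card α + 1)) (g := card)
    (f := fun k => q k / (Fintype.card α).choose k)
    (fun ω _ => mem_range_succ_iff.2 (card_le_univ ω)), mul_sum]
  refine sum_congr rfl fun k hk => ?_
  have hfiber : {ω ∈ ({ω | U ⊆ ω} : Finset (Finset α)) | #ω = k}
      = {ω ∈ powersetCard k (univ : Finset α) | U ⊆ ω} := by
    ext ω
    simp [and_comm]
  have hcount :
      ((Fintype.card α).descFactorial #U * #{ω ∈ powersetCard k univ | U ⊆ ω} : ℝ)
        = (Fintype.card α).choose k * k.descFactorial #U := by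
    exact_mod_cast descFactorial_mul_card_filter_superset U k
  have hchoose : ((Fintype.card α).choose k : ℝ) ≠ 0 :=
    Nat.cast_ne_zero.2 (Nat.choose_ne_zero (mem_range_succ_iff.1 hk))
  rw [sum_const, hfiber, nsmul_eq_mul]
  field_simp
  linear_combination q k * hcount

lemma sum_filter_card_lt_div_choose (q : ℕ → ℝ) {m : ℕ} (hm : m ≤ Fintype.card α + 1) :
    ∑ ω : Finset α with #ω < m, q #ω / (Fintype.card α).choose #ω
      = ∑ k ∈ range m, q k := by
  rw [← sum_fiberwise_of_maps_to' (t := range m) (g := card)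
    (f := fun k => q k / (Fintype.card α).choose k) fun ω hω => mem_range.2 (mem_filter.1 hω).2]
  refine sum_congr rfl fun k hk => ?_
  have hfiber : {ω ∈ ({ω | #ω < m} : Finset (Finset α)) | #ω = k} = powersetCard k univ := by
    ext ω
    simp only [mem_filter, mem_univ, true_and, mem_powersetCard_univ]
    exact ⟨And.right, fun h => ⟨h ▸ mem_range.1 hk, h⟩⟩
  have hchoose : ((Fintype.card α).choose k : ℝ) ≠ 0 :=
    Nat.cast_ne_zero.2 (Nat.choose_ne_zero (by have := mem_range.1 hk; omega))
  rw [sum_const, hfiber, card_powersetCard, card_univ, nsmul_eq_mul]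
  field_simp

variable (α) in
/-- The law of a random subset of `α` whose size has law `q` and which is uniformly distributed
given its size. -/
noncomputable def randomSubsetMeasure (q : ℕ → ℝ) : Measure (Finset α) :=
  ∑ ω, ENNReal.ofReal (q #ω / (Fintype.card α).choose #ω) • Measure.dirac ω

variable {q : ℕ → ℝ}

lemma randomSubsetMeasure_apply (hq : ∀ k, 0 ≤ q k) (P : Finset α → Prop) [DecidablePred P] :
    randomSubsetMeasure α q {ω | P ω}
      = ENNReal.ofReal (∑ ω with P ω, q #ω / (Fintype.card α).choose #ω) := by
  rw [ENNReal.ofReal_sum_of_nonneg fun ω _ => div_nonneg (hq _) (Nat.cast_nonneg _), sum_filter]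
  simp [randomSubsetMeasure, Measure.coe_finsetSum, Set.indicator_apply]

lemma isProbabilityMeasure_randomSubsetMeasure (hq : ∀ k, 0 ≤ q k)
    (hq_sum : ∑ k ∈ range (Fintype.card α + 1), q k = 1) :
    IsProbabilityMeasure (randomSubsetMeasure α q) := by
  classical
  constructor
  have hsum := descFactorial_mul_sum_superset q (∅ : Finset α)
  simp only [card_empty, Nat.descFactorial_zero, Nat.cast_one, one_mul, mul_one, hq_sum,
    empty_subset, filter_true] at hsum
  simpa [hsum] using randomSubsetMeasure_apply hq (fun _ : Finset α => True)

lemma randomSubsetMeasure_superset [DecidableEq α] (hq : ∀ k, 0 ≤ q k) {p : ℝ} (hp : 0 ≤ p)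
    (U : Finset α)
    (hmoment : ∑ k ∈ range (Fintype.card α + 1), q k * k.descFactorial #U
      = p ^ #U * (Fintype.card α).descFactorial #U) :
    randomSubsetMeasure α q {ω | U ⊆ ω} = ENNReal.ofReal p ^ #U := by
  have hU : ((Fintype.card α).descFactorial #U : ℝ) ≠ 0 :=
    Nat.cast_ne_zero.2 fun h => (Nat.descFactorial_eq_zero_iff_lt.1 h).not_ge (card_le_univ U)
  rw [randomSubsetMeasure_apply hq, ← ENNReal.ofReal_pow hp]
  congr 1
  apply mul_left_cancel₀ hU
  rw [descFactorial_mul_sum_superset, hmoment, mul_comm]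

lemma randomSubsetMeasure_card_lt (hq : ∀ k, 0 ≤ q k) {m : ℕ}
    (hm : m ≤ Fintype.card α + 1) :
    randomSubsetMeasure α q {ω | #ω < m} = ENNReal.ofReal (∑ k ∈ range m, q k) := by
  rw [randomSubsetMeasure_apply hq, sum_filter_card_lt_div_choose q hm]

lemma sum_indicator_setOf_mem (c : ℝ) (ω : Finset α) :
    ∑ i, {ω : Finset α | i ∈ ω}.indicator (fun _ => c) ω = #ω * c := by
  classical
  simp [Set.indicator_apply]

end RandomSubset

lemma iIndepSet_mem_of_measure_superset {ι : Type*} {μ : Measure (Finset ι)} (S : Finset ι)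
    (p : ℝ≥0∞) (h : ∀ U ⊆ S, μ {ω | U ⊆ ω} = p ^ #U) :
    iIndepSet (fun i : S => {ω : Finset ι | ↑i ∈ ω}) μ := by
  rw [iIndepSet_iff_meas_biInter fun i => measurableSet_mem_finset _]
  intro T
  have hinter : ⋂ i ∈ T, {ω : Finset ι | ↑i ∈ ω}
      = {ω | T.map (Function.Embedding.subtype _) ⊆ ω} := by
    ext ω
    simp [subset_iff]
  have hmap : T.map (Function.Embedding.subtype _) ⊆ S := fun x hx => by
    obtain ⟨i, -, rfl⟩ := mem_map.1 hx
    exact i.2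
  have hsingle : ∀ i : S, μ {ω | ↑i ∈ ω} = p := fun i => by
    simpa using h {↑i} (singleton_subset_iff.2 i.2)
  rw [hinter, h _ hmap, card_map, prod_congr rfl fun i _ => hsingle i, prod_const]

lemma kWiseIndepFun_indicator_mem {n k : ℕ} {μ : Measure (Finset (Fin n))} (p : ℝ≥0∞)
    (h : ∀ U : Finset (Fin n), #U ≤ k → μ {ω | U ⊆ ω} = p ^ #U) (c : ℝ) :
    kWiseIndepFun μ k (fun i => {ω | i ∈ ω}.indicator fun _ => c) := by
  intro S hS
  have hindep := (iIndepSet_mem_of_measure_superset S p fun U hU =>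
    h U ((card_le_card hU).trans hS)).iIndepFun_indicator (β := ℝ) (m := inferInstance)
  convert hindep.comp (fun _ x => c * x) fun _ => measurable_const_mul c using 1
  ext i ω
  by_cases hi : (i : Fin n) ∈ ω <;> simp [hi]

/-- When `m - 1 = p (N - 2)`, the law on `{0, m, N}` with the same first three factorial moments
as `Binomial(N, p)`. -/
noncomputable def threePointLaw (p : ℝ) (m N k : ℕ) : ℝ :=
  (if k = 0 then (1 - p) ^ 2 / m else 0) +
  (if k = m then p * (1 - p) * N * (N - 1) / (m * (N - m)) else 0) +
  (if k = N then p ^ 2 / (N - m) else 0)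

lemma threePointLaw_nonneg {p : ℝ} (hp₀ : 0 ≤ p) (hp₁ : p ≤ 1) {m N : ℕ} (hmN : m < N)
    (k : ℕ) : 0 ≤ threePointLaw p m N k := by
  have hNm : (0 : ℝ) < N - m := sub_pos.2 (Nat.cast_lt.2 hmN)
  have hN : (0 : ℝ) ≤ N - 1 := sub_nonneg.2 (Nat.one_le_cast.2 (Nat.one_le_of_lt hmN))
  have hp : 0 ≤ 1 - p := sub_nonneg.2 hp₁
  unfold threePointLaw
  split_ifs <;> positivity

lemma sum_range_threePointLaw_mul {p : ℝ} {m N : ℕ} (hmN : m ≤ N) (f : ℕ → ℝ) :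
    ∑ k ∈ range (N + 1), threePointLaw p m N k * f k =
      (1 - p) ^ 2 / m * f 0 + p * (1 - p) * N * (N - 1) / (m * (N - m)) * f m
        + p ^ 2 / (N - m) * f N := by
  simp [threePointLaw, add_mul, sum_add_distrib, ite_mul, Nat.lt_succ_of_le hmN]

lemma sum_range_threePointLaw {p : ℝ} {m N : ℕ} (hm : 0 < m) (hmN : m < N) :
    ∑ k ∈ range m, threePointLaw p m N k = (1 - p) ^ 2 / m := by
  rw [sum_eq_single_of_mem 0 (mem_range.2 hm) fun k hk hk0 => ?_]
  · simp [threePointLaw, hm.ne, (hm.trans hmN).ne]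
  · have hkm := mem_range.1 hk
    simp [threePointLaw, hk0, hkm.ne, (hkm.trans hmN).ne]

lemma threePoint_factorial_moments {p m N : ℝ} (hm : m ≠ 0) (hmN : N - m ≠ 0)
    (hrel : m - 1 = p * (N - 2)) {r : ℕ} (hr : r ≤ 3) :
    (1 - p) ^ 2 / m * (descPochhammer ℝ r).eval 0
      + p * (1 - p) * N * (N - 1) / (m * (N - m)) * (descPochhammer ℝ r).eval m
      + p ^ 2 / (N - m) * (descPochhammer ℝ r).eval N
      = p ^ r * (descPochhammer ℝ r).eval N := by
  obtain rfl : m = 1 + p * (N - 2) := by linarith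
  interval_cases r <;> simp [descPochhammer_succ_eval] <;> field_simp <;> ring

lemma sum_range_threePointLaw_mul_descFactorial {p : ℝ} {m N : ℕ} (hm : 0 < m) (hmN : m < N)
    (hrel : (m : ℝ) - 1 = p * (N - 2)) {r : ℕ} (hr : r ≤ 3) :
    ∑ k ∈ range (N + 1), threePointLaw p m N k * k.descFactorial r
      = p ^ r * N.descFactorial r := by
  simp only [← descPochhammer_eval_eq_descFactorial ℝ, sum_range_threePointLaw_mul hmN.le,
    Nat.cast_zero]
  exact threePoint_factorial_moments (Nat.cast_ne_zero.2 hm.ne')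
    (sub_ne_zero.2 (Nat.cast_injective.ne hmN.ne')) hrel hr

section ThreePoint

variable {α : Type*} [Fintype α] {p : ℝ} {m : ℕ}

lemma isProbabilityMeasure_randomSubsetMeasure_threePointLaw (hp₀ : 0 ≤ p) (hp₁ : p ≤ 1)
    (hm : 0 < m) (hmN : m < Fintype.card α) (hrel : (m : ℝ) - 1 = p * (Fintype.card α - 2)) :
    IsProbabilityMeasure (randomSubsetMeasure α (threePointLaw p m (Fintype.card α))) :=
  isProbabilityMeasure_randomSubsetMeasure (threePointLaw_nonneg hp₀ hp₁ hmN)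
    (by simpa using sum_range_threePointLaw_mul_descFactorial hm hmN hrel (Nat.zero_le 3))

lemma randomSubsetMeasure_threePointLaw_superset [DecidableEq α] (hp₀ : 0 ≤ p)
    (hp₁ : p ≤ 1) (hm : 0 < m) (hmN : m < Fintype.card α)
    (hrel : (m : ℝ) - 1 = p * (Fintype.card α - 2))
    (U : Finset α) (hU : #U ≤ 3) :
    randomSubsetMeasure α (threePointLaw p m (Fintype.card α)) {ω | U ⊆ ω}
      = ENNReal.ofReal p ^ #U :=
  randomSubsetMeasure_superset (threePointLaw_nonneg hp₀ hp₁ hmN) hp₀ U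
    (by simpa using sum_range_threePointLaw_mul_descFactorial hm hmN hrel hU)

lemma randomSubsetMeasure_threePointLaw_card_lt (hp₀ : 0 ≤ p) (hp₁ : p ≤ 1) (hm : 0 < m)
    (hmN : m < Fintype.card α) :
    randomSubsetMeasure α (threePointLaw p m (Fintype.card α)) {ω | #ω < m}
      = ENNReal.ofReal ((1 - p) ^ 2 / m) := by
  rw [randomSubsetMeasure_card_lt (threePointLaw_nonneg hp₀ hp₁ hmN) (by omega),
    sum_range_threePointLaw hm hmN]

end ThreePoint

theorem threewise_indep_counterexample
    (n : ℕ) (δ : ℝ) (hδ : 0 < δ) (m : ℕ) (hm : 0 < m) (hmn : m ≤ n)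
    (hmdef : (m : ℝ) = (n + δ) / (δ + 2)) :
    ∃ (Ω : Type) (_ : MeasurableSpace Ω) (μ : Measure Ω) (_ : IsProbabilityMeasure μ)
      (X : Fin n → Ω → ℝ),
      (∀ i, Measurable (X i)) ∧
      (∀ i ω, 0 ≤ X i ω) ∧
      (∀ i, ∫ ω, X i ω ∂μ = 1) ∧
      kWiseIndepFun μ 3 X ∧
      (μ {ω | ∑ i, X i ω < n + δ}).toReal = (δ + 1) ^ 2 / ((δ + 2) * (n + δ)) := by
  set p : ℝ := 1 / (δ + 2) with hp
  have hδ2 : (0 : ℝ) < δ + 2 := by linarith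
  have hp₀ : 0 ≤ p := by positivity
  have hp₁ : p ≤ 1 := by rw [hp, div_le_one hδ2]; linarith
  have hnδ : (n : ℝ) + δ = (δ + 2) * m := by rw [hmdef]; field_simp
  have hmn' : m < Fintype.card (Fin n) := by
    refine (Fintype.card_fin n).symm ▸ hmn.lt_of_ne fun h => ?_
    subst h
    nlinarith [(Nat.one_le_cast (α := ℝ)).2 hm]
  have hrel : (m : ℝ) - 1 = p * (Fintype.card (Fin n) - 2) := by
    rw [Fintype.card_fin, hp]; field_simp; linarith
  set μ := randomSubsetMeasure (Fin n) (threePointLaw p m (Fintype.card (Fin n)))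
  have hsuperset : ∀ U : Finset (Fin n), #U ≤ 3 → μ {ω | U ⊆ ω} = .ofReal p ^ #U :=
    randomSubsetMeasure_threePointLaw_superset hp₀ hp₁ hm hmn' hrel
  refine ⟨Finset (Fin n), inferInstance, μ,
    isProbabilityMeasure_randomSubsetMeasure_threePointLaw hp₀ hp₁ hm hmn' hrel,
    fun i => {ω | i ∈ ω}.indicator fun _ => δ + 2,
    fun i => measurable_const.indicator (measurableSet_mem_finset i),
    fun i => Set.indicator_nonneg fun _ _ => hδ2.le, fun i => ?_,
    kWiseIndepFun_indicator_mem _ hsuperset _, ?_⟩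
  · have hmem : μ {ω | i ∈ ω} = .ofReal p := by
      simpa using hsuperset {i} (by simp)
    rw [integral_indicator_const _ (measurableSet_mem_finset i), measureReal_def, hmem,
      ENNReal.toReal_ofReal hp₀, smul_eq_mul, hp]
    field_simp
  · simp only [sum_indicator_setOf_mem, hnδ, mul_comm _ (δ + 2), mul_lt_mul_iff_right₀ hδ2,
      Nat.cast_lt]
    rw [randomSubsetMeasure_threePointLaw_card_lt hp₀ hp₁ hm hmn', ENNReal.toReal_ofReal
      (by positivity), hp, hmdef]
    field_simp
    ring
end
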